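/- arXiv:1911.06872 — 2 statements merged into one kernel-verified Lean document; each statement's English description precedes it below -/
import Mathlib

section
/- For every integer k ≥ 2 and every real ρ ≥ 1, the function y ↦ (∏_{j=0}^{k-2} (y - j) / (k-1)!)^ρ is convex on the interval [k-1, ∞). -/
/-!
On `[k - 1, ∞)` every factor `y - j` is affine, nonnegative and increasing. Nonnegative increasing
functions monovary, so `ConvexOn.mul` makes their product convex (and it stays nonnegative and
increasing); finally `x ↦ x ^ ρ` is convex and increasing on `[0, ∞)` for `ρ ≥ 1`.
-/

open Set

section FinsetProd

variable {𝕜 ι : Type*} [Field 𝕜] [LinearOrder 𝕜] [IsStrictOrderedRing 𝕜]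
  {s : Set 𝕜} {t : Finset ι} {f : ι → 𝕜 → 𝕜}

theorem ConvexOn.finsetProd (hs : Convex 𝕜 s) (hf : ∀ i ∈ t, ConvexOn 𝕜 s (f i))
    (hf_mono : ∀ i ∈ t, MonotoneOn (f i) s) (hf₀ : ∀ i ∈ t, ∀ x ∈ s, 0 ≤ f i x) :
    ConvexOn 𝕜 s fun x ↦ ∏ i ∈ t, f i x := by
  induction t using Finset.cons_induction with
  | empty => simpa using convexOn_const (1 : 𝕜) hs
  | cons a t _ ih =>
    simp only [Finset.forall_mem_cons] at hf hf_mono hf₀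
    simp only [Finset.prod_cons]
    have hprod_mono : MonotoneOn (fun x ↦ ∏ i ∈ t, f i x) s :=
      MonotoneOn.finsetProd hf_mono.2 hf₀.2
    exact hf.1.mul (ih hf.2 hf_mono.2 hf₀.2) hf₀.1
      (fun x hx ↦ Finset.prod_nonneg fun i hi ↦ hf₀.2 i hi x hx)
      (hf_mono.1.monovaryOn hprod_mono)

end FinsetProd

theorem ConvexOn.rpow {s : Set ℝ} {f : ℝ → ℝ} (hf : ConvexOn ℝ s f) (hf₀ : ∀ x ∈ s, 0 ≤ f x)
    {p : ℝ} (hp : 1 ≤ p) : ConvexOn ℝ s fun x ↦ f x ^ p := by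
  refine ⟨hf.1, fun x hx y hy a b ha hb hab ↦ ?_⟩
  calc f (a • x + b • y) ^ p
      ≤ (a * f x + b * f y) ^ p :=
        Real.rpow_le_rpow (hf₀ _ (hf.1 hx hy ha hb hab)) (hf.2 hx hy ha hb hab)
          (zero_le_one.trans hp)
    _ ≤ a • f x ^ p + b • f y ^ p :=
        (convexOn_rpow hp).2 (hf₀ x hx) (hf₀ y hy) ha hb hab

theorem natCast_le_sub_one_of_mem_range {n j : ℕ} (hj : j ∈ Finset.range n) :
    (j : ℝ) ≤ n - 1 := by
  have : ((j + 1 : ℕ) : ℝ) ≤ n := Nat.cast_le.2 (Finset.mem_range.1 hj)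
  push_cast at this
  linarith

theorem prod_range_sub_natCast_nonneg {n : ℕ} {y : ℝ} (hy : y ∈ Ici ((n : ℝ) - 1)) :
    0 ≤ ∏ j ∈ Finset.range n, (y - j) :=
  Finset.prod_nonneg fun _ hj ↦ sub_nonneg.2 ((natCast_le_sub_one_of_mem_range hj).trans hy)

theorem convexOn_prod_range_sub_natCast (n : ℕ) :
    ConvexOn ℝ (Ici ((n : ℝ) - 1)) fun y ↦ ∏ j ∈ Finset.range n, (y - j) :=
  ConvexOn.finsetProd (convex_Ici _)
    (fun _ _ ↦ (convexOn_id (convex_Ici _)).sub (concaveOn_const _ (convex_Ici _)))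
    (fun _ _ _ _ _ _ hxy ↦ sub_le_sub_right hxy _)
    (fun _ hj _ hy ↦ sub_nonneg.2 ((natCast_le_sub_one_of_mem_range hj).trans hy))

theorem binom_rpow_convex_of_one_le_general (k : ℕ) (ρ : ℝ) (hρ : 1 ≤ ρ) :
    ConvexOn ℝ (Set.Ici ((k : ℝ) - 1))
      (fun y : ℝ => ((∏ j ∈ Finset.range (k - 1), (y - (j : ℝ))) / (Nat.factorial (k - 1))) ^ ρ) := by
  have hsub : Ici ((k : ℝ) - 1) ⊆ Ici (((k - 1 : ℕ) : ℝ) - 1) := by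
    have : ((k - 1 : ℕ) : ℝ) ≤ k := Nat.cast_le.2 (Nat.sub_le k 1)
    exact Ici_subset_Ici.2 (by linarith)
  have hfact : (0 : ℝ) ≤ ((k - 1).factorial : ℝ)⁻¹ := by positivity
  have hconvex := ((convexOn_prod_range_sub_natCast (k - 1)).subset hsub (convex_Ici _)).smul hfact
  refine ConvexOn.rpow (hconvex.congr fun y _ ↦ ?_) (fun y hy ↦ ?_) hρ
  · exact inv_mul_eq_div _ _
  · exact div_nonneg (prod_range_sub_natCast_nonneg (hsub hy)) (by positivity)

/-- For every integer `k ≥ 2` and every real `ρ ≥ 1`, the function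
`y ↦ (∏_{j=0}^{k-2} (y - j) / (k-1)!)^ρ` (the real extension of the binomial
coefficient `C(y, k-1)` raised to the power `ρ`) is convex on `[k-1, ∞)`. -/
theorem binom_rpow_convex_of_one_le (k : ℕ) (hk : 2 ≤ k) (ρ : ℝ) (hρ : 1 ≤ ρ) :
    ConvexOn ℝ (Set.Ici ((k : ℝ) - 1))
      (fun y : ℝ => ((∏ j ∈ Finset.range (k - 1), (y - (j : ℝ))) / (Nat.factorial (k - 1))) ^ ρ) :=
  binom_rpow_convex_of_one_le_general k ρ hρ
end

section
/- For every integer k ≥ 3 there exists ρ̲ < 1 such that for all ρ ≥ ρ̲, the function y ↦ (∏_{j=0}^{k-2}(y-j))^ρ is convex on [k-1, ∞). -/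
/-!
Write `f(y) = ∏_{j<n} (y - j)` with `n = k - 1`, so that `f ^ ρ = exp (ρ L)` with
`L = ∑ log (y - j)`. Then `(f ^ ρ)'' = f ^ ρ · ρ · (ρ S₁² - S₂)`, where `S₁ = ∑ (y - j)⁻¹` and
`S₂ = ∑ (y - j)⁻²`. For `y ≥ n` any two of the terms `(y - j)⁻¹` are within a factor `n` of each
other, and this forces `(2n - 1) S₂ ≤ n S₁²`; so `ρ₀ = n / (2n - 1)`, which is `< 1` once `n ≥ 2`.
-/

open Finset Real Set

theorem Finset.sum_sq_le_sq_sum_of_le_mul {ι : Type*} (s : Finset ι) {a : ι → ℝ} {r : ℝ}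
    (ha : ∀ i ∈ s, 0 ≤ a i) (hr : ∀ i ∈ s, ∀ j ∈ s, a i ≤ r * a j) :
    (r + (#s - 1)) * ∑ i ∈ s, a i ^ 2 ≤ r * (∑ i ∈ s, a i) ^ 2 := by
  classical
  have hterm : ∀ i ∈ s, (r + (#s - 1)) * a i ^ 2 ≤ r * a i * ∑ j ∈ s, a j := by
    intro i hi
    have hpair : ∀ j ∈ s.erase i, a i ^ 2 ≤ r * a i * a j := fun j hj => by
      rw [sq, mul_assoc, mul_left_comm]
      exact mul_le_mul_of_nonneg_left (hr i hi j (mem_of_mem_erase hj)) (ha i hi)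
    have hrest := sum_le_sum hpair
    rw [sum_const, card_erase_of_mem hi, nsmul_eq_mul, ← mul_sum,
      Nat.cast_sub (card_pos.2 ⟨i, hi⟩), Nat.cast_one] at hrest
    rw [← add_sum_erase s a hi]
    linarith
  calc (r + (#s - 1)) * ∑ i ∈ s, a i ^ 2 = ∑ i ∈ s, (r + (#s - 1)) * a i ^ 2 := mul_sum _ _ _
    _ ≤ ∑ i ∈ s, r * a i * ∑ j ∈ s, a j := sum_le_sum hterm
    _ = r * (∑ i ∈ s, a i) ^ 2 := by rw [← sum_mul, ← mul_sum]; ring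

theorem convexOn_exp_of_hasDerivAt2 {D : Set ℝ} (hD : Convex ℝ D) {L L' L'' : ℝ → ℝ}
    (hL : ContinuousOn L D) (hL' : ∀ x ∈ interior D, HasDerivAt L (L' x) x)
    (hL'' : ∀ x ∈ interior D, HasDerivAt L' (L'' x) x)
    (hnonneg : ∀ x ∈ interior D, 0 ≤ L' x ^ 2 + L'' x) :
    ConvexOn ℝ D fun x => exp (L x) := by
  refine convexOn_of_hasDerivWithinAt2_nonneg hD (continuous_exp.comp_continuousOn hL)
    (f' := fun x => exp (L x) * L' x) (f'' := fun x => exp (L x) * (L' x ^ 2 + L'' x))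
    (fun x hx => (hL' x hx).exp.hasDerivWithinAt) (fun x hx => ?_)
    (fun x hx => mul_nonneg (exp_pos _).le (hnonneg x hx))
  exact (((hL' x hx).exp.fun_mul (hL'' x hx)).congr_deriv (by ring)).hasDerivWithinAt

theorem hasDerivAt_sum_log_sub {ι : Type*} (s : Finset ι) (c : ι → ℝ) {y : ℝ}
    (hy : ∀ i ∈ s, y ≠ c i) :
    HasDerivAt (fun y => ∑ i ∈ s, log (y - c i)) (∑ i ∈ s, (y - c i)⁻¹) y :=
  HasDerivAt.fun_sum fun i hi => by
    simpa using ((hasDerivAt_id y).sub_const (c i)).log (sub_ne_zero.2 (hy i hi))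

theorem hasDerivAt_sum_inv_sub {ι : Type*} (s : Finset ι) (c : ι → ℝ) {y : ℝ}
    (hy : ∀ i ∈ s, y ≠ c i) :
    HasDerivAt (fun y => ∑ i ∈ s, (y - c i)⁻¹) (-∑ i ∈ s, ((y - c i)⁻¹) ^ 2) y := by
  rw [← sum_neg_distrib]
  exact HasDerivAt.fun_sum fun i hi => by
    simpa [neg_div, one_div] using
      ((hasDerivAt_id y).sub_const (c i)).fun_inv (sub_ne_zero.2 (hy i hi))

theorem sub_natCast_pos_of_mem_range {n j : ℕ} (hj : j ∈ range n) {y : ℝ}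
    (hy : (n : ℝ) - 1 < y) : 0 < y - j := by
  have : (j : ℝ) + 1 ≤ n := by exact_mod_cast mem_range.1 hj
  linarith

theorem sum_inv_sub_natCast_sq_le {n : ℕ} {y : ℝ} (hy : (n : ℝ) ≤ y) :
    (2 * n - 1) * ∑ j ∈ range n, ((y - j)⁻¹) ^ 2 ≤ n * (∑ j ∈ range n, (y - j)⁻¹) ^ 2 := by
  have hpos : ∀ j ∈ range n, 0 < y - j := fun j hj =>
    sub_natCast_pos_of_mem_range hj (by linarith)
  have hratio : ∀ i ∈ range n, ∀ j ∈ range n, (y - i)⁻¹ ≤ n * (y - j)⁻¹ := by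
    intro i hi j hj
    have hi' : (i : ℝ) + 1 ≤ n := by exact_mod_cast mem_range.1 hi
    rw [inv_eq_one_div, ← div_eq_mul_inv, div_le_div_iff₀ (hpos i hi) (hpos j hj)]
    nlinarith [(Nat.cast_nonneg j : (0 : ℝ) ≤ j)]
  have := (range n).sum_sq_le_sq_sum_of_le_mul (fun j hj => (inv_pos.2 (hpos j hj)).le) hratio
  rwa [card_range, add_sub_assoc', ← two_mul] at this

theorem sum_inv_sub_natCast_sq_le_mul {n : ℕ} (hn : 0 < n) {ρ y : ℝ} (hρ : n / (2 * n - 1) ≤ ρ)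
    (hy : (n : ℝ) ≤ y) :
    ∑ j ∈ range n, ((y - j)⁻¹) ^ 2 ≤ ρ * (∑ j ∈ range n, (y - j)⁻¹) ^ 2 := by
  have hn₁ : (0 : ℝ) < 2 * n - 1 := by
    have : (1 : ℝ) ≤ n := by exact_mod_cast hn
    linarith
  refine le_of_mul_le_mul_left ?_ hn₁
  calc (2 * n - 1) * ∑ j ∈ range n, ((y - j)⁻¹) ^ 2
      ≤ n * (∑ j ∈ range n, (y - j)⁻¹) ^ 2 := sum_inv_sub_natCast_sq_le hy
    _ ≤ (2 * n - 1) * (ρ * (∑ j ∈ range n, (y - j)⁻¹) ^ 2) := by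
      rw [← mul_assoc]
      exact mul_le_mul_of_nonneg_right ((div_le_iff₀' hn₁).1 hρ) (sq_nonneg _)

theorem convexOn_prod_sub_natCast_rpow {n : ℕ} (hn : 0 < n) {ρ : ℝ} (hρ : n / (2 * n - 1) ≤ ρ) :
    ConvexOn ℝ (Ici (n : ℝ)) fun y => (∏ j ∈ range n, (y - j)) ^ ρ := by
  have hn₁ : (0 : ℝ) < 2 * n - 1 := by
    have : (1 : ℝ) ≤ n := by exact_mod_cast hn
    linarith
  have hρ₀ : 0 ≤ ρ := (div_nonneg (Nat.cast_nonneg n) hn₁.le).trans hρ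
  have hne : ∀ y ∈ Ioi ((n : ℝ) - 1), ∀ j ∈ range n, y ≠ j := fun y hy j hj =>
    (sub_pos.1 (sub_natCast_pos_of_mem_range hj hy)).ne'
  have hL : ∀ y ∈ Ioi ((n : ℝ) - 1), HasDerivAt (fun y : ℝ => ρ * ∑ j ∈ range n, log (y - j))
      (ρ * ∑ j ∈ range n, (y - j)⁻¹) y := fun y hy =>
    (hasDerivAt_sum_log_sub _ _ (hne y hy)).const_mul ρ
  have hL' : ∀ y ∈ Ioi ((n : ℝ) - 1), HasDerivAt (fun y : ℝ => ρ * ∑ j ∈ range n, (y - j)⁻¹)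
      (ρ * -∑ j ∈ range n, ((y - j)⁻¹) ^ 2) y := fun y hy =>
    (hasDerivAt_sum_inv_sub _ _ (hne y hy)).const_mul ρ
  have hIci : Ici (n : ℝ) ⊆ Ioi ((n : ℝ) - 1) := Ici_subset_Ioi.2 (by linarith)
  have hinterior : interior (Ici (n : ℝ)) ⊆ Ioi ((n : ℝ) - 1) := interior_subset.trans hIci
  have hexp : ConvexOn ℝ (Ici (n : ℝ)) fun y => exp (ρ * ∑ j ∈ range n, log (y - j)) := by
    refine convexOn_exp_of_hasDerivAt2 (convex_Ici _)
      (fun y hy => (hL y (hIci hy)).continuousAt.continuousWithinAt)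
      (fun y hy => hL y (hinterior hy)) (fun y hy => hL' y (hinterior hy)) fun y hy => ?_
    rw [interior_Ici, Set.mem_Ioi] at hy
    have hspread := sum_inv_sub_natCast_sq_le_mul hn hρ hy.le
    nlinarith [mul_nonneg hρ₀ (sub_nonneg.2 hspread)]
  refine hexp.congr fun y hy => ?_
  have hpos : ∀ j ∈ range n, 0 < y - j := fun j hj => sub_natCast_pos_of_mem_range hj (hIci hy)
  rw [rpow_def_of_pos (prod_pos hpos), log_prod fun j hj => (hpos j hj).ne', mul_comm]

/-- For every integer `k ≥ 3` there exists `ρ̲ < 1` such that for all `ρ ≥ ρ̲`,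
the function `y ↦ (∏_{j=0}^{k-2} (y - j))^ρ` is convex on `[k-1, ∞)`. -/
theorem binom_rpow_convex_of_lt_one (k : ℕ) (hk : 3 ≤ k) :
    ∃ ρ₀ : ℝ, ρ₀ < 1 ∧ ∀ ρ : ℝ, ρ₀ ≤ ρ →
      ConvexOn ℝ (Set.Ici ((k : ℝ) - 1))
        (fun y : ℝ => (∏ j ∈ Finset.range (k - 1), (y - (j : ℝ))) ^ ρ) := by
  have hn : ((k - 1 : ℕ) : ℝ) = k - 1 := by rw [Nat.cast_sub (by omega), Nat.cast_one]
  have hk' : (3 : ℝ) ≤ k := by exact_mod_cast hk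
  refine ⟨(k - 1 : ℕ) / (2 * (k - 1 : ℕ) - 1), ?_, fun ρ hρ => ?_⟩
  · rw [hn, div_lt_one (by linarith)]
    linarith
  · rw [← hn]
    exact convexOn_prod_sub_natCast_rpow (by omega) hρ
end
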